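/- arXiv:1612.06517 — 2 statements merged into one kernel-verified Lean document; each statement's English description precedes it below -/
import Mathlib

section
/- The normalization constant of the Jacobi Muttalib–Borodin ensemble: ∫_{(0,1)^N} ∏_{1≤i<j≤N}(x_j-x_i)(x_j^θ - x_i^θ) ∏_{k=1}^N x_k^a (1-x_k)^b dx = θ^{N(N-1)/2} ∏_{l=1}^N Γ(θ(l-1)+a+1)Γ(l+b)Γ(l+1) / Γ(θ(l-1)+N+a+b+1), for θ > 0, a > -1, b > -1. -/
/-!
Up to the sign `(-1) ^ (N(N-1)/2)`, the integrand is the product of the weighted Vandermonde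
determinant `det [x_j ^ a (1 - x_j) ^ b (1 - x_j) ^ i]` and `det [(x_j ^ θ) ^ i]`, so Andréief's
identity turns the integral into `N!` times the determinant of the matrix of Beta integrals
`Γ(θj + a + 1) Γ(i + 1 + b) / Γ(θj + a + b + 2 + i)`. After pulling out the row and column
factors, `det [1 / Γ(w_j + i)]` with `w_j = θj + a + b + 2` is again a Vandermonde determinant,
because `Γ(w + N - 1) / Γ(w + i)` is a monic polynomial of degree `N - 1 - i` in `w`.
-/

open MeasureTheory Finset Matrix Equiv Polynomial Set
open scoped Nat

theorem Fin.prod_prod_Ioi_const_mul {M : Type*} [CommMonoid M] {n : ℕ} (c : M)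
    (g : Fin n → Fin n → M) :
    ∏ i : Fin n, ∏ j ∈ Finset.Ioi i, c * g i j =
      c ^ (n * (n - 1) / 2) * ∏ i : Fin n, ∏ j ∈ Finset.Ioi i, g i j := by
  simp_rw [prod_mul_distrib, Finset.prod_const, prod_pow_eq_pow_sum, Fin.card_Ioi]
  rw [Fin.sum_univ_eq_sum_range (fun l => n - 1 - l), sum_range_reflect (fun l => l) n,
    sum_range_id]

theorem Fin.prod_prod_Ioi_rev {M : Type*} [CommMonoid M] {n : ℕ} (f : Fin n → Fin n → M) :
    ∏ i : Fin n, ∏ j ∈ Finset.Ioi i, f j.rev i.rev = ∏ i : Fin n, ∏ j ∈ Finset.Ioi i, f i j := by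
  rw [prod_sigma', prod_sigma']
  refine prod_nbij' (fun p => ⟨p.2.rev, p.1.rev⟩) (fun p => ⟨p.2.rev, p.1.rev⟩) ?_ ?_ ?_ ?_ ?_
    <;> simp

theorem Fin.factorial_mul_prod_prod_Ioi_sub (n : ℕ) :
    (n ! : ℝ) * ∏ i : Fin n, ∏ j ∈ Finset.Ioi i, ((j : ℝ) - i) =
      ∏ l ∈ range n, ((l + 1)! : ℝ) := by
  rcases n with _ | n
  · simp
  rw [← det_vandermonde, det_vandermonde_id_eq_superFactorial, ← Nat.cast_mul,
    ← Nat.superFactorial_succ, ← Nat.prod_range_factorial_succ, Nat.cast_prod]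

theorem Real.Gamma_add_nat_eq_prod_Ico_mul {y : ℝ} (hy : 0 < y) {k n : ℕ} (hkn : k ≤ n) :
    Real.Gamma (y + n) = (∏ m ∈ Ico k n, (y + m)) * Real.Gamma (y + k) := by
  induction n, hkn using Nat.le_induction with
  | base => simp
  | succ n hkn ih =>
    rw [Nat.cast_succ, ← add_assoc, Real.Gamma_add_one (by positivity), ih,
      prod_Ico_succ_top hkn]
    ring

theorem integral_rpow_mul_one_sub_rpow {p q : ℝ} (hp : -1 < p) (hq : -1 < q) :
    ∫ x in Ioo (0 : ℝ) 1, x ^ p * (1 - x) ^ q =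
      Real.Gamma (p + 1) * Real.Gamma (q + 1) / Real.Gamma (p + q + 2) := by
  have hbeta : ((∫ x in Ioo (0 : ℝ) 1, x ^ p * (1 - x) ^ q : ℝ) : ℂ) =
      Complex.betaIntegral (p + 1 : ℝ) (q + 1 : ℝ) := by
    rw [Complex.betaIntegral, intervalIntegral.integral_of_le zero_le_one,
      ← integral_Ioc_eq_integral_Ioo, ← integral_complex_ofReal]
    refine setIntegral_congr_fun measurableSet_Ioc fun x ⟨hx0, hx1⟩ => ?_
    push_cast
    rw [Complex.ofReal_cpow hx0.le, Complex.ofReal_cpow (by linarith)]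
    push_cast
    ring_nf
  rw [Complex.betaIntegral_eq_Gamma_mul_div _ _ (by simp; linarith) (by simp; linarith),
    ← Complex.ofReal_add, Complex.Gamma_ofReal, Complex.Gamma_ofReal, Complex.Gamma_ofReal,
    show p + 1 + (q + 1) = p + q + 2 by ring] at hbeta
  exact_mod_cast hbeta

theorem integrableOn_rpow_mul_one_sub_rpow {p q : ℝ} (hp : -1 < p) (hq : -1 < q) :
    IntegrableOn (fun x : ℝ => x ^ p * (1 - x) ^ q) (Ioo 0 1) := by
  refine Integrable.of_integral_ne_zero ?_
  rw [integral_rpow_mul_one_sub_rpow hp hq]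
  exact (div_pos (mul_pos (Real.Gamma_pos_of_pos (by linarith))
    (Real.Gamma_pos_of_pos (by linarith))) (Real.Gamma_pos_of_pos (by linarith))).ne'

theorem Matrix.det_eval_of_natDegree_eq_rev {R : Type*} [CommRing R] {n : ℕ} (v : Fin n → R)
    (p : Fin n → R[X]) (h_deg : ∀ i, (p i).natDegree = i.rev) (h_monic : ∀ i, (p i).Monic) :
    det (of fun i j => (p i).eval (v j)) = ∏ i, ∏ j ∈ Finset.Ioi i, (v i - v j) := by
  have h := det_eval_matrixOfPolynomials_eq_det_vandermonde (v ∘ Fin.rev) (p ∘ Fin.rev)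
    (fun i => by simp [h_deg]) (fun i => h_monic i.rev)
  simp only [det_vandermonde, Function.comp_apply] at h
  rw [Fin.prod_prod_Ioi_rev (fun i j => v i - v j)] at h
  rw [h, ← det_transpose, ← det_submatrix_equiv_self Fin.revPerm]
  rfl

theorem Matrix.det_inv_Gamma_add_nat {n : ℕ} (w : Fin n → ℝ) (hw : ∀ j, 0 < w j) :
    det (of fun i j : Fin n => (Real.Gamma (w j + i))⁻¹) =
      (∏ i, ∏ j ∈ Finset.Ioi i, (w i - w j)) / ∏ j, Real.Gamma (w j + n - 1) := by
  set p : Fin n → ℝ[X] := fun i => ∏ m ∈ Ico (i : ℕ) (n - 1), (X + C (m : ℝ))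
  have hentry : ∀ i j : Fin n,
      (Real.Gamma (w j + i))⁻¹ = (Real.Gamma (w j + n - 1))⁻¹ * (p i).eval (w j) := by
    intro i j
    have hpos : ∀ m : ℕ, 0 < w j + m := fun m => by have := hw j; positivity
    have hn : ((n - 1 : ℕ) : ℝ) = n - 1 := Nat.cast_pred i.pos
    rw [add_sub_assoc, ← hn,
      Real.Gamma_add_nat_eq_prod_Ico_mul (hw j) (k := i) (n := n - 1) (by omega), eval_prod]
    simp only [eval_add, eval_X, eval_C]
    field_simp [(hpos _).ne', (Real.Gamma_pos_of_pos (hpos i)).ne',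
      (prod_pos fun m _ => hpos m).ne']
  have hmonic : ∀ i, (p i).Monic := fun i => monic_prod_of_monic _ _ fun m _ => monic_X_add_C _
  have hdeg : ∀ i : Fin n, (p i).natDegree = i.rev := by
    intro i
    rw [natDegree_prod_of_monic _ _ fun m _ => monic_X_add_C _]
    simp only [natDegree_X_add_C, sum_const, Nat.card_Ico, smul_eq_mul, mul_one, Fin.val_rev]
    omega
  simp_rw [hentry]
  refine (det_mul_row (fun j => (Real.Gamma (w j + n - 1))⁻¹)
    (of fun i j => (p i).eval (w j))).trans ?_
  rw [det_eval_of_natDegree_eq_rev w p hdeg hmonic, prod_inv_distrib, inv_mul_eq_div]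

theorem Matrix.sign_mul_sum_sign_mul_prod_perm_apply {R ι : Type*} [CommRing R] [Fintype ι]
    [DecidableEq ι] (M : Matrix ι ι R) (σ : Perm ι) :
    ∑ τ : Perm ι, (Perm.sign σ : R) * Perm.sign τ * ∏ k, M (σ k) (τ k) = det M := by
  have h := det_permute σ M
  rw [← det_transpose, det_apply'] at h
  simp only [transpose_apply, submatrix_apply, id] at h
  simp_rw [mul_assoc, ← mul_sum, h, ← mul_assoc]
  rw [← Int.cast_mul, ← Units.val_mul, Int.units_mul_self, Units.val_one, Int.cast_one, one_mul]

theorem integral_det_mul_det {𝕜 ι α : Type*} [RCLike 𝕜] [Fintype ι] [DecidableEq ι]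
    [MeasurableSpace α] (μ : Measure α) [SigmaFinite μ] (F G : ι → α → 𝕜)
    (hFG : ∀ i j, Integrable (fun y => F i y * G j y) μ) :
    ∫ x : ι → α, det (of fun i j => F i (x j)) * det (of fun i j => G i (x j))
        ∂(Measure.pi fun _ => μ) =
      (Fintype.card ι)! * det (of fun i j => ∫ y, F i y * G j y ∂μ) := by
  have hexpand : ∀ x : ι → α, det (of fun i j => F i (x j)) * det (of fun i j => G i (x j)) =
      ∑ σ : Perm ι, ∑ τ : Perm ι,
        (Perm.sign σ : 𝕜) * Perm.sign τ * ∏ k, F (σ k) (x k) * G (τ k) (x k) := by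
    intro x
    simp only [det_apply', sum_mul_sum, of_apply, prod_mul_distrib]
    exact sum_congr rfl fun σ _ => sum_congr rfl fun τ _ => by ring
  have hint : ∀ σ τ : Perm ι, Integrable
      (fun x : ι → α => ∏ k, F (σ k) (x k) * G (τ k) (x k)) (Measure.pi fun _ => μ) :=
    fun σ τ => Integrable.fintype_prod fun k => hFG (σ k) (τ k)
  simp_rw [hexpand]
  calc _ = ∑ σ : Perm ι, ∑ τ : Perm ι, (Perm.sign σ : 𝕜) * Perm.sign τ *
        ∏ k, (of fun i j => ∫ y, F i y * G j y ∂μ) (σ k) (τ k) := by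
        rw [integral_finsetSum _ fun σ _ => integrable_finsetSum _ fun τ _ =>
          (hint σ τ).const_mul _]
        refine sum_congr rfl fun σ _ => ?_
        rw [integral_finsetSum _ fun τ _ => (hint σ τ).const_mul _]
        refine sum_congr rfl fun τ _ => ?_
        rw [integral_const_mul,
          integral_fintype_prod_eq_prod (fun k y => F (σ k) y * G (τ k) y)]
        rfl
    _ = _ := by
      simp only [sign_mul_sum_sign_mul_prod_perm_apply, sum_const, card_univ,
        Fintype.card_perm, nsmul_eq_mul]

theorem jacobi_integrand_eq_det_mul_det {N : ℕ} (θ a b : ℝ) (x : Fin N → ℝ) :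
    (∏ i : Fin N, ∏ j ∈ Finset.Ioi i, (x j - x i) * (x j ^ θ - x i ^ θ)) *
        ∏ k : Fin N, x k ^ a * (1 - x k) ^ b =
      (-1) ^ (N * (N - 1) / 2) *
        (det (of fun i j : Fin N => x j ^ a * (1 - x j) ^ b * (1 - x j) ^ (i : ℕ)) *
          det (of fun i j : Fin N => (x j ^ θ) ^ (i : ℕ))) := by
  have hF : det (of fun i j : Fin N => x j ^ a * (1 - x j) ^ b * (1 - x j) ^ (i : ℕ)) =
      (∏ k, x k ^ a * (1 - x k) ^ b) *
        ((-1) ^ (N * (N - 1) / 2) * ∏ i : Fin N, ∏ j ∈ Finset.Ioi i, (x j - x i)) := by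
    refine (det_mul_row (fun j => x j ^ a * (1 - x j) ^ b)
      (vandermonde fun j => 1 - x j)ᵀ).trans ?_
    rw [det_transpose, det_vandermonde, ← Fin.prod_prod_Ioi_const_mul]
    congr 1
    exact prod_congr rfl fun i _ => prod_congr rfl fun j _ => by ring
  have hG : det (of fun i j : Fin N => (x j ^ θ) ^ (i : ℕ)) =
      ∏ i : Fin N, ∏ j ∈ Finset.Ioi i, (x j ^ θ - x i ^ θ) :=
    (det_transpose _).trans (det_vandermonde _)
  have hsplit : ∏ i : Fin N, ∏ j ∈ Finset.Ioi i, (x j - x i) * (x j ^ θ - x i ^ θ) =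
      (∏ i : Fin N, ∏ j ∈ Finset.Ioi i, (x j - x i)) *
        ∏ i : Fin N, ∏ j ∈ Finset.Ioi i, (x j ^ θ - x i ^ θ) := by
    simp_rw [prod_mul_distrib]
  have hsign : ((-1 : ℝ) ^ (N * (N - 1) / 2)) * (-1) ^ (N * (N - 1) / 2) = 1 := by
    rw [← mul_pow]; norm_num
  rw [hF, hG, hsplit]
  linear_combination (-(∏ i : Fin N, ∏ j ∈ Finset.Ioi i, (x j - x i)) *
    (∏ i : Fin N, ∏ j ∈ Finset.Ioi i, (x j ^ θ - x i ^ θ)) *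
      ∏ k, x k ^ a * (1 - x k) ^ b) * hsign

theorem jacobi_moment_integrand_eqOn (θ a b : ℝ) (i j : ℕ) :
    EqOn (fun y : ℝ => y ^ a * (1 - y) ^ b * (1 - y) ^ i * (y ^ θ) ^ j)
      (fun y => y ^ (θ * j + a) * (1 - y) ^ (b + i)) (Ioo 0 1) := by
  intro y ⟨hy0, hy1⟩
  dsimp only
  rw [Real.rpow_add hy0, Real.rpow_add (by linarith), Real.rpow_mul hy0.le, Real.rpow_natCast,
    Real.rpow_natCast]
  ring

theorem integral_jacobi_moment {θ a b : ℝ} (hθ : 0 ≤ θ) (ha : -1 < a) (hb : -1 < b)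
    (i j : ℕ) :
    ∫ y in Ioo (0 : ℝ) 1, y ^ a * (1 - y) ^ b * (1 - y) ^ i * (y ^ θ) ^ j =
      Real.Gamma (θ * j + a + 1) * Real.Gamma (i + 1 + b) /
        Real.Gamma (θ * j + a + b + 2 + i) := by
  have hθj : 0 ≤ θ * j := by positivity
  rw [setIntegral_congr_fun measurableSet_Ioo (jacobi_moment_integrand_eqOn θ a b i j),
    integral_rpow_mul_one_sub_rpow (by linarith) (by linarith [(i.cast_nonneg : (0 : ℝ) ≤ i)])]
  ring_nf

theorem factorial_mul_det_jacobi_moment (N : ℕ) {θ a b : ℝ} (hθ : 0 ≤ θ) (ha : -1 < a)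
    (hb : -1 < b) :
    (N ! : ℝ) * det (of fun i j : Fin N => Real.Gamma (θ * (j : ℕ) + a + 1) *
        Real.Gamma ((i : ℕ) + 1 + b) / Real.Gamma (θ * (j : ℕ) + a + b + 2 + (i : ℕ))) =
      (-θ) ^ (N * (N - 1) / 2) * ∏ l ∈ range N, Real.Gamma (θ * l + a + 1) *
        Real.Gamma (l + 1 + b) * Real.Gamma (l + 2) / Real.Gamma (θ * l + N + a + b + 1) := by
  set w : Fin N → ℝ := fun j => θ * (j : ℕ) + a + b + 2
  have hw : ∀ j, 0 < w j := fun j => by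
    have : 0 ≤ θ * (j : ℕ) := by positivity
    simp only [w]; linarith
  have hmat : (of fun i j : Fin N => Real.Gamma (θ * (j : ℕ) + a + 1) *
      Real.Gamma ((i : ℕ) + 1 + b) / Real.Gamma (θ * (j : ℕ) + a + b + 2 + (i : ℕ))) =
      of fun i j : Fin N => Real.Gamma (θ * (j : ℕ) + a + 1) *
        (of fun i j : Fin N => Real.Gamma ((i : ℕ) + 1 + b) *
          (of fun i j : Fin N => (Real.Gamma (w j + i))⁻¹) i j) i j := by
    ext i j
    simp [w, div_eq_mul_inv, mul_assoc]
  have hdiff : ∏ i : Fin N, ∏ j ∈ Finset.Ioi i, (w i - w j) =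
      (-θ) ^ (N * (N - 1) / 2) * ∏ i : Fin N, ∏ j ∈ Finset.Ioi i, ((j : ℝ) - i) := by
    rw [← Fin.prod_prod_Ioi_const_mul]
    refine prod_congr rfl fun i _ => prod_congr rfl fun j _ => ?_
    simp only [w]
    ring
  have hlast : ∏ j, Real.Gamma (w j + N - 1) =
      ∏ l ∈ range N, Real.Gamma (θ * l + N + a + b + 1) := by
    rw [← Fin.prod_univ_eq_prod_range (fun l => Real.Gamma (θ * l + N + a + b + 1))]
    refine prod_congr rfl fun j _ => ?_
    simp only [w]
    ring_nf
  have hfac : ∀ l : ℕ, Real.Gamma (l + 2) = ((l + 1)! : ℝ) := fun l => by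
    rw [← Real.Gamma_nat_eq_factorial]; push_cast; ring_nf
  rw [hmat, det_mul_row, det_mul_column, det_inv_Gamma_add_nat w hw, hdiff, hlast,
    prod_div_distrib, prod_mul_distrib, prod_mul_distrib]
  simp only [hfac]
  rw [← Fin.factorial_mul_prod_prod_Ioi_sub,
    Fin.prod_univ_eq_prod_range (fun l => Real.Gamma (θ * l + a + 1)),
    Fin.prod_univ_eq_prod_range (fun l => Real.Gamma (l + 1 + b))]
  ring

theorem jacobi_MB_normalisation_general (N : ℕ) (θ a b : ℝ)
    (hθ : 0 < θ) (ha : -1 < a) (hb : -1 < b) :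
    (∫ x in Set.univ.pi fun _ : Fin N => Set.Ioo (0:ℝ) 1,
        (∏ i : Fin N, ∏ j ∈ Finset.Ioi i, (x j - x i) * (x j ^ θ - x i ^ θ)) *
          ∏ k : Fin N, x k ^ a * (1 - x k) ^ b) =
      θ ^ (N * (N - 1) / 2) *
        ∏ l ∈ Finset.range N,
          Real.Gamma (θ * l + a + 1) * Real.Gamma (l + 1 + b) * Real.Gamma (l + 2) /
            Real.Gamma (θ * l + N + a + b + 1) := by
  have hcube : (volume : Measure (Fin N → ℝ)).restrict (univ.pi fun _ => Ioo 0 1) =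
      Measure.pi fun _ => volume.restrict (Ioo 0 1) := by
    rw [volume_pi, Measure.restrict_pi_pi]
  have hint : ∀ i j : Fin N, IntegrableOn
      (fun y : ℝ => y ^ a * (1 - y) ^ b * (1 - y) ^ (i : ℕ) * (y ^ θ) ^ (j : ℕ)) (Ioo 0 1) := by
    intro i j
    have hθj : 0 ≤ θ * (j : ℕ) := by positivity
    exact (integrableOn_rpow_mul_one_sub_rpow (by linarith)
      (by linarith [((i : ℕ).cast_nonneg : (0 : ℝ) ≤ (i : ℕ))])).congr_fun
      (jacobi_moment_integrand_eqOn θ a b i j).symm measurableSet_Ioo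
  simp_rw [hcube, jacobi_integrand_eq_det_mul_det θ a b]
  rw [integral_const_mul, integral_det_mul_det _ _ _ hint, Fintype.card_fin]
  simp_rw [integral_jacobi_moment hθ.le ha hb]
  rw [factorial_mul_det_jacobi_moment N hθ.le ha hb, ← mul_assoc, ← mul_pow, neg_one_mul, neg_neg]

/-- Normalisation of the Jacobi Muttalib–Borodin ensemble. -/
theorem jacobi_MB_normalisation (N : ℕ) (hN : 1 ≤ N) (θ a b : ℝ)
    (hθ : 0 < θ) (ha : -1 < a) (hb : -1 < b) :
    (∫ x in Set.univ.pi fun _ : Fin N => Set.Ioo (0:ℝ) 1,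
        (∏ i : Fin N, ∏ j ∈ Finset.Ioi i, (x j - x i) * (x j ^ θ - x i ^ θ)) *
          ∏ k : Fin N, x k ^ a * (1 - x k) ^ b) =
      θ ^ (N * (N - 1) / 2) *
        ∏ l ∈ Finset.range N,
          Real.Gamma (θ * l + a + 1) * Real.Gamma (l + 1 + b) * Real.Gamma (l + 2) /
            Real.Gamma (θ * l + N + a + b + 1) :=
  jacobi_MB_normalisation_general N θ a b hθ ha hb
end

section
/- Heine-type formula for generalized averaged characteristic polynomials: for the ensemble with density proportional to ∏_{i<j}(x_j-x_i)(x_j^θ-x_i^θ) ∏_k w(x_k) on (0,∞)^k, the polynomial p_k(x) = E[∏_{l=1}^k (x - x_l)] is monic of degree k and satisfies ∫_0^∞ w(x) p_k(x) x^{θj} dx = 0 for all 0 ≤ j ≤ k-1. -/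
/-!
With `g_b(t) = w(t) (t^θ)^b`, the density is the polynomial ensemble `det[x_i^a] det[g_b(x_i)]`.
Andréief's identity turns the integral of a product of two such determinants into `k!` times
the determinant of the moments `M a b = ∫ t^a g_b(t)`. As `∏_l (y - x_l) det[x_i^a]` is, up to
sign, the Vandermonde determinant of the `k + 1` points `y, x_1, …, x_k`, expanding it along the
column of `y` gives Heine's formula `E ∏_l (y - x_l) = ± det[y^a | M a b] / det[M a b]_{a,b<k}`.
The leading coefficient of this bordered determinant is `± det[M a b]_{a,b<k}`, and integrating
it against `g_j` replaces the column `y^a` by the column `M a j`, giving two equal columns.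
-/

open MeasureTheory Finset Matrix Polynomial

section Andreief

variable {α ι : Type*} [Fintype ι] [DecidableEq ι]

theorem det_of_eq_sum_prod (g : ι → α → ℝ) (x : ι → α) :
    (of fun b i => g b (x i)).det =
      ∑ τ : Equiv.Perm ι, (Equiv.Perm.sign τ : ℝ) * ∏ i, g (τ i) (x i) := by
  simp only [det_apply', of_apply]

theorem det_of_mul_prod_eq_sum (f h : ι → α → ℝ) (x : ι → α) :
    (of fun a i => f a (x i)).det * ∏ i, h i (x i) =
      ∑ σ : Equiv.Perm ι, (Equiv.Perm.sign σ : ℝ) * ∏ i, (f (σ i) (x i) * h i (x i)) := by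
  simp only [det_of_eq_sum_prod, Finset.sum_mul, mul_assoc, Finset.prod_mul_distrib]

variable [MeasurableSpace α] (μ : Measure α) [SigmaFinite μ]

theorem integrable_det_mul_prod (f h : ι → α → ℝ)
    (hfh : ∀ a i, Integrable (fun t => f a t * h i t) μ) :
    Integrable (fun x => (of fun a i => f a (x i)).det * ∏ i, h i (x i))
      (Measure.pi fun _ => μ) := by
  simp only [det_of_mul_prod_eq_sum]
  exact integrable_finsetSum _ fun σ _ =>
    (Integrable.fintype_prod fun i => hfh (σ i) i).const_mul _

theorem integral_det_mul_prod (f h : ι → α → ℝ)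
    (hfh : ∀ a i, Integrable (fun t => f a t * h i t) μ) :
    ∫ x, (of fun a i => f a (x i)).det * ∏ i, h i (x i) ∂(Measure.pi fun _ => μ) =
      (of fun a i => ∫ t, f a t * h i t ∂μ).det := by
  simp only [det_of_mul_prod_eq_sum]
  rw [integral_finsetSum _ fun σ _ =>
    (Integrable.fintype_prod fun i => hfh (σ i) i).const_mul _, det_apply']
  refine Finset.sum_congr rfl fun σ _ => ?_
  rw [integral_const_mul, integral_fintype_prod_eq_prod (f := fun i t => f (σ i) t * h i t)]
  rfl

theorem integrable_det_mul_det (f g : ι → α → ℝ)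
    (hfg : ∀ a b, Integrable (fun t => f a t * g b t) μ) :
    Integrable (fun x => (of fun a i => f a (x i)).det * (of fun b i => g b (x i)).det)
      (Measure.pi fun _ => μ) := by
  simp only [det_of_eq_sum_prod g, Finset.mul_sum, mul_left_comm _ (_ : ℝ)]
  exact integrable_finsetSum _ fun τ _ =>
    (integrable_det_mul_prod μ f _ fun a i => hfg a (τ i)).const_mul _

/-- Andréief's identity. -/
theorem integral_det_mul_det_s17 (f g : ι → α → ℝ)
    (hfg : ∀ a b, Integrable (fun t => f a t * g b t) μ) :
    ∫ x, (of fun a i => f a (x i)).det * (of fun b i => g b (x i)).det ∂(Measure.pi fun _ => μ) =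
      (Fintype.card ι).factorial * (of fun a b => ∫ t, f a t * g b t ∂μ).det := by
  set M := of fun a b => ∫ t, f a t * g b t ∂μ
  have hterm (τ : Equiv.Perm ι) :
      ∫ x, (Equiv.Perm.sign τ : ℝ) * ((of fun a i => f a (x i)).det * ∏ i, g (τ i) (x i))
        ∂(Measure.pi fun _ => μ) = M.det := by
    rw [integral_const_mul, integral_det_mul_prod μ f _ fun a i => hfg a (τ i)]
    change _ * (M.submatrix id τ).det = _
    rw [det_permute', ← mul_assoc, ← Int.cast_mul, ← Units.val_mul, Int.units_mul_self,
      Units.val_one, Int.cast_one, one_mul]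
  simp only [det_of_eq_sum_prod g, Finset.mul_sum, mul_left_comm _ (_ : ℝ)]
  rw [integral_finsetSum _ fun τ _ =>
    (integrable_det_mul_prod μ f _ fun a i => hfg a (τ i)).const_mul _]
  simp only [hterm, Finset.sum_const, Finset.card_univ, Fintype.card_perm, nsmul_eq_mul]

end Andreief

section Bordered

variable {R : Type*} [CommRing R] {k : ℕ}

def borderedDet (M : Matrix (Fin (k + 1)) (Fin k) R) (c : Fin (k + 1) → R) : R :=
  (of fun a => (Fin.cons (c a) (M a) : Fin (k + 1) → R)).det

theorem borderedDet_eq_sum (M : Matrix (Fin (k + 1)) (Fin k) R) (c : Fin (k + 1) → R) :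
    borderedDet M c =
      ∑ a : Fin (k + 1), (-1) ^ (a : ℕ) * c a * (M.submatrix a.succAbove id).det := by
  rw [borderedDet, det_succ_column_zero]
  rfl

theorem borderedDet_column_eq_zero (M : Matrix (Fin (k + 1)) (Fin k) R) (j : Fin k) :
    borderedDet M (fun a => M a j) = 0 :=
  det_zero_of_column_eq (Fin.succ_ne_zero j).symm fun _ => rfl

theorem prod_sub_mul_det_vandermonde (y : R) (x : Fin k → R) :
    (∏ l, (y - x l)) * (vandermonde x).det =
      (-1) ^ k *
        borderedDet (of fun (a : Fin (k + 1)) b => x b ^ (a : ℕ)) fun a => y ^ (a : ℕ) := by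
  have hcons : (of fun a : Fin (k + 1) => (Fin.cons (y ^ (a : ℕ))
      ((of fun (a : Fin (k + 1)) b => x b ^ (a : ℕ)) a) : Fin (k + 1) → R)) =
        (vandermonde (Fin.cons y x))ᵀ := by
    ext a i
    refine Fin.cases ?_ (fun b => ?_) i <;>
      simp only [transpose_apply, vandermonde_apply, of_apply, Fin.cons_zero, Fin.cons_succ]
  have hsign : ∏ l, (y - x l) = (-1) ^ k * ∏ l, (x l - y) := by
    simpa using (Finset.prod_neg (s := Finset.univ) fun l => x l - y)
  rw [borderedDet, hcons, det_transpose, det_vandermonde, det_vandermonde,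
    Fin.prod_univ_succ, Fin.prod_Ioi_zero, hsign]
  simp only [Fin.cons_zero, Fin.cons_succ, Fin.prod_Ioi_succ]
  ring

noncomputable def heinePoly (M : Matrix (Fin (k + 1)) (Fin k) R) : R[X] :=
  borderedDet (M.map C) fun a => X ^ (a : ℕ)

theorem heinePoly_eq_sum (M : Matrix (Fin (k + 1)) (Fin k) R) :
    heinePoly M =
      ∑ a : Fin (k + 1), C ((-1) ^ (a : ℕ) * (M.submatrix a.succAbove id).det) * X ^ (a : ℕ) := by
  rw [heinePoly, borderedDet_eq_sum]
  refine Finset.sum_congr rfl fun a _ => ?_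
  rw [submatrix_map, ← RingHom.mapMatrix_apply, ← RingHom.map_det]
  simp only [map_mul, map_pow, map_neg, map_one]
  ring

theorem eval_heinePoly (M : Matrix (Fin (k + 1)) (Fin k) R) (y : R) :
    (heinePoly M).eval y = borderedDet M fun a => y ^ (a : ℕ) := by
  simp only [heinePoly_eq_sum, borderedDet_eq_sum, eval_finsetSum, eval_mul, eval_C, eval_pow,
    eval_X]
  exact Finset.sum_congr rfl fun _ _ => by ring

theorem natDegree_heinePoly_le (M : Matrix (Fin (k + 1)) (Fin k) R) :
    (heinePoly M).natDegree ≤ k := by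
  rw [heinePoly_eq_sum]
  refine natDegree_sum_le_of_forall_le _ _ fun a _ => (natDegree_C_mul_X_pow_le _ _).trans ?_
  exact Fin.is_le a

theorem coeff_heinePoly_self (M : Matrix (Fin (k + 1)) (Fin k) R) :
    (heinePoly M).coeff k = (-1) ^ k * (M.submatrix Fin.castSucc id).det := by
  rw [heinePoly_eq_sum, finsetSum_coeff, Finset.sum_eq_single (Fin.last k)]
  · rw [coeff_C_mul_X_pow, if_pos (Fin.val_last k).symm]
    simp
  · intro a _ ha
    rw [coeff_C_mul_X_pow, if_neg]
    exact fun h => ha (Fin.ext h.symm)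
  · simp

end Bordered

section PolynomialEnsemble

open scoped Nat

variable (μ : Measure ℝ) {k : ℕ}

noncomputable def momentMatrix (g : Fin k → ℝ → ℝ) : Matrix (Fin (k + 1)) (Fin k) ℝ :=
  of fun a b => ∫ t, t ^ (a : ℕ) * g b t ∂μ

noncomputable def ensembleDensity (g : Fin k → ℝ → ℝ) (x : Fin k → ℝ) : ℝ :=
  (vandermonde x).det * (of fun b i => g b (x i)).det

variable {μ} {g : Fin k → ℝ → ℝ}

theorem integral_ensembleDensity [SigmaFinite μ]
    (hg : ∀ a ≤ k, ∀ b, Integrable (fun t => t ^ a * g b t) μ) :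
    ∫ x, ensembleDensity g x ∂(Measure.pi fun _ => μ) =
      k ! * ((momentMatrix μ g).submatrix Fin.castSucc id).det := by
  have := integral_det_mul_det_s17 μ (fun (a : Fin k) t => t ^ (a : ℕ)) g
    fun a b => hg a a.is_lt.le b
  rw [Fintype.card_fin] at this
  simp only [ensembleDensity, ← det_transpose (vandermonde _)]
  exact this

theorem integral_prod_sub_mul_ensembleDensity [SigmaFinite μ]
    (hg : ∀ a ≤ k, ∀ b, Integrable (fun t => t ^ a * g b t) μ) (y : ℝ) :
    ∫ x, (∏ l, (y - x l)) * ensembleDensity g x ∂(Measure.pi fun _ => μ) =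
      (-1) ^ k * k ! * (heinePoly (momentMatrix μ g)).eval y := by
  have hminor (a : Fin (k + 1)) := integral_det_mul_det_s17 μ
    (fun (b : Fin k) t => t ^ (a.succAbove b : ℕ)) g fun b c => hg _ (a.succAbove b).is_le c
  have hminor_int (a : Fin (k + 1)) := integrable_det_mul_det μ
    (fun (b : Fin k) t => t ^ (a.succAbove b : ℕ)) g fun b c => hg _ (a.succAbove b).is_le c
  have hexpand (x : Fin k → ℝ) : (∏ l, (y - x l)) * ensembleDensity g x =
      ∑ a : Fin (k + 1), (-1) ^ k * ((-1) ^ (a : ℕ) * y ^ (a : ℕ)) *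
        ((of fun b i => x i ^ (a.succAbove b : ℕ)).det * (of fun b i => g b (x i)).det) := by
    rw [ensembleDensity, ← mul_assoc, prod_sub_mul_det_vandermonde, borderedDet_eq_sum,
      Finset.mul_sum, Finset.sum_mul]
    refine Finset.sum_congr rfl fun a _ => ?_
    rw [show (of fun (c : Fin (k + 1)) b => x b ^ (c : ℕ)).submatrix a.succAbove id =
      of fun b i => x i ^ (a.succAbove b : ℕ) from rfl]
    ring
  simp only [hexpand]
  rw [integral_finsetSum _ fun a _ => (hminor_int a).const_mul _, eval_heinePoly,
    borderedDet_eq_sum, Finset.mul_sum]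
  refine Finset.sum_congr rfl fun a _ => ?_
  rw [integral_const_mul, hminor, Fintype.card_fin]
  change _ * (_ * ((momentMatrix μ g).submatrix a.succAbove id).det) = _
  ring

theorem integral_eval_heinePoly_mul
    (hg : ∀ a ≤ k, ∀ b, Integrable (fun t => t ^ a * g b t) μ) (j : Fin k) :
    ∫ t, (heinePoly (momentMatrix μ g)).eval t * g j t ∂μ = 0 := by
  have hexpand (t : ℝ) : (heinePoly (momentMatrix μ g)).eval t * g j t =
      ∑ a : Fin (k + 1), (-1) ^ (a : ℕ) * ((momentMatrix μ g).submatrix a.succAbove id).det *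
        (t ^ (a : ℕ) * g j t) := by
    rw [eval_heinePoly, borderedDet_eq_sum, Finset.sum_mul]
    exact Finset.sum_congr rfl fun a _ => by ring
  simp only [hexpand]
  rw [integral_finsetSum _ fun (a : Fin (k + 1)) _ => (hg a a.is_le j).const_mul _,
    ← borderedDet_column_eq_zero (momentMatrix μ g) j, borderedDet_eq_sum]
  refine Finset.sum_congr rfl fun a _ => ?_
  rw [integral_const_mul, momentMatrix, of_apply]
  ring

theorem exists_monic_orthogonal_averagedCharPoly [SigmaFinite μ]
    (hg : ∀ a ≤ k, ∀ b, Integrable (fun t => t ^ a * g b t) μ)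
    (hZ : ∫ x, ensembleDensity g x ∂(Measure.pi fun _ => μ) ≠ 0) :
    ∃ P : ℝ[X], P.Monic ∧ P.natDegree = k ∧
      (∀ y, P.eval y = (∫ x, (∏ l, (y - x l)) * ensembleDensity g x ∂(Measure.pi fun _ => μ)) /
        ∫ x, ensembleDensity g x ∂(Measure.pi fun _ => μ)) ∧
      ∀ j, ∫ t, P.eval t * g j t ∂μ = 0 := by
  set D := ((momentMatrix μ g).submatrix Fin.castSucc id).det
  have hD : D ≠ 0 := right_ne_zero_of_mul (integral_ensembleDensity hg ▸ hZ)
  set P := C ((-1) ^ k * D⁻¹) * heinePoly (momentMatrix μ g)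
  have hcoeff : P.coeff k = 1 := by
    rw [coeff_C_mul, coeff_heinePoly_self, mul_mul_mul_comm, ← mul_pow, neg_one_mul, neg_neg,
      one_pow, one_mul, inv_mul_cancel₀ hD]
  have hdeg : P.natDegree ≤ k := (natDegree_C_mul_le _ _).trans (natDegree_heinePoly_le _)
  refine ⟨P, monic_of_natDegree_le_of_coeff_eq_one k hdeg hcoeff,
    natDegree_eq_of_le_of_coeff_ne_zero hdeg (hcoeff ▸ one_ne_zero), fun y => ?_, fun j => ?_⟩
  · rw [integral_prod_sub_mul_ensembleDensity hg, integral_ensembleDensity hg, eval_mul, eval_C]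
    have : (k ! : ℝ) ≠ 0 := by positivity
    field_simp
    exact (mul_div_cancel_left₀ _ hD).symm
  · simp only [P, eval_mul, eval_C, mul_assoc, integral_const_mul, integral_eval_heinePoly_mul hg,
      mul_zero]

end PolynomialEnsemble

section MuttalibBorodin

theorem ensembleDensity_weight_mul_rpow_pow (θ : ℝ) (w : ℝ → ℝ) {k : ℕ} (x : Fin k → ℝ) :
    ensembleDensity (fun (b : Fin k) t => w t * (t ^ θ) ^ (b : ℕ)) x =
      (∏ i, ∏ j ∈ Ioi i, (x j - x i) * (x j ^ θ - x i ^ θ)) * ∏ l, w (x l) := by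
  rw [ensembleDensity, ← det_transpose (of _),
    show (of fun (b : Fin k) i => w (x i) * (x i ^ θ) ^ (b : ℕ))ᵀ =
      of fun i b => w (x i) * vandermonde (fun i => x i ^ θ) i b from rfl,
    det_mul_column, det_vandermonde, det_vandermonde]
  simp only [Finset.prod_mul_distrib]
  ring

theorem integrableOn_pow_mul_weight_mul_rpow_pow {w : ℝ → ℝ} {θ R : ℝ} (hθ : 0 ≤ θ)
    (hmom : ∀ r : ℝ, 0 ≤ r → r ≤ R → IntegrableOn (fun x : ℝ => w x * x ^ r) (Set.Ioi 0))
    {a b : ℕ} (hab : a + θ * b ≤ R) :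
    IntegrableOn (fun t => t ^ a * (w t * (t ^ θ) ^ b)) (Set.Ioi 0) := by
  refine (hmom _ (by positivity) hab).congr_fun (fun t (ht : 0 < t) => ?_) measurableSet_Ioi
  dsimp only
  rw [Real.rpow_add ht, Real.rpow_natCast, Real.rpow_mul_natCast (le_of_lt ht)]
  ring

end MuttalibBorodin

theorem heine_averaged_char_poly_general (k : ℕ) (θ : ℝ) (hθ : 0 < θ)
    (w : ℝ → ℝ)
    (hmom : ∀ r : ℝ, 0 ≤ r → r ≤ 2 * k + 2 * θ * k →
      IntegrableOn (fun x : ℝ => w x * x ^ r) (Set.Ioi 0))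
    (Z : ℝ)
    (hZ : Z = ∫ x in Set.univ.pi fun _ : Fin k => Set.Ioi (0:ℝ),
        (∏ i : Fin k, ∏ j ∈ Finset.Ioi i, (x j - x i) * (x j ^ θ - x i ^ θ)) *
          ∏ l : Fin k, w (x l))
    (hZpos : 0 < Z)
    (p : ℝ → ℝ)
    (hp : ∀ y : ℝ, p y =
      (∫ x in Set.univ.pi fun _ : Fin k => Set.Ioi (0:ℝ),
        (∏ l : Fin k, (y - x l)) *
          ((∏ i : Fin k, ∏ j ∈ Finset.Ioi i, (x j - x i) * (x j ^ θ - x i ^ θ)) *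
            ∏ l : Fin k, w (x l))) / Z) :
    ∃ P : Polynomial ℝ, P.Monic ∧ P.natDegree = k ∧ (∀ y : ℝ, p y = P.eval y) ∧
      ∀ j : ℕ, j < k →
        ∫ x in Set.Ioi (0:ℝ), w x * P.eval x * x ^ (θ * j) = 0 := by
  have hbox : volume.restrict (Set.univ.pi fun _ : Fin k => Set.Ioi (0:ℝ)) =
      Measure.pi fun _ => volume.restrict (Set.Ioi 0) := by
    rw [volume_pi, Measure.restrict_pi_pi]
  have hg : ∀ a ≤ k, ∀ b : Fin k,
      IntegrableOn (fun t => t ^ a * (w t * (t ^ θ) ^ (b : ℕ))) (Set.Ioi 0) := fun a ha b =>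
    integrableOn_pow_mul_weight_mul_rpow_pow hθ.le hmom <| by
      have : (a : ℝ) ≤ k := by exact_mod_cast ha
      have : (b : ℝ) ≤ k := by exact_mod_cast b.is_lt.le
      nlinarith
  simp only [hbox, ← ensembleDensity_weight_mul_rpow_pow] at hZ hp
  obtain ⟨P, hmonic, hdeg, heval, horth⟩ :=
    exists_monic_orthogonal_averagedCharPoly hg (hZ ▸ hZpos.ne')
  refine ⟨P, hmonic, hdeg, fun y => by rw [hp, heval, hZ], fun j hj => ?_⟩
  refine (setIntegral_congr_fun measurableSet_Ioi fun t (ht : 0 < t) => ?_).trans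
    (horth ⟨j, hj⟩)
  rw [Real.rpow_mul_natCast ht.le]
  ring

/-- Heine-type formula: the averaged characteristic polynomial of the Muttalib–Borodin
ensemble is a monic polynomial of degree k, orthogonal to x^{θj} for 0 ≤ j < k. -/
theorem heine_averaged_char_poly (k : ℕ) (θ : ℝ) (hθ : 0 < θ)
    (w : ℝ → ℝ) (hw : ∀ x, 0 ≤ w x) (hmeas : Measurable w)
    (hmom : ∀ r : ℝ, 0 ≤ r → r ≤ 2 * k + 2 * θ * k →
      IntegrableOn (fun x : ℝ => w x * x ^ r) (Set.Ioi 0))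
    (Z : ℝ)
    (hZ : Z = ∫ x in Set.univ.pi fun _ : Fin k => Set.Ioi (0:ℝ),
        (∏ i : Fin k, ∏ j ∈ Finset.Ioi i, (x j - x i) * (x j ^ θ - x i ^ θ)) *
          ∏ l : Fin k, w (x l))
    (hZpos : 0 < Z)
    (p : ℝ → ℝ)
    (hp : ∀ y : ℝ, p y =
      (∫ x in Set.univ.pi fun _ : Fin k => Set.Ioi (0:ℝ),
        (∏ l : Fin k, (y - x l)) *
          ((∏ i : Fin k, ∏ j ∈ Finset.Ioi i, (x j - x i) * (x j ^ θ - x i ^ θ)) *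
            ∏ l : Fin k, w (x l))) / Z) :
    ∃ P : Polynomial ℝ, P.Monic ∧ P.natDegree = k ∧ (∀ y : ℝ, p y = P.eval y) ∧
      ∀ j : ℕ, j < k →
        ∫ x in Set.Ioi (0:ℝ), w x * P.eval x * x ^ (θ * j) = 0 :=
  heine_averaged_char_poly_general k θ hθ w hmom Z hZ hZpos p hp
end
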